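/- Let r be a pre-hereditary Hoehnke radical on S-acts, A a semisimple S-act (r(A) = Δ_A), and B an r-dense subact of A. Then B is intersection-large in A: for every subact X of A with at least two elements, |B ∩ X| ≥ 2. -/

import Mathlib

universe u

variable {S : Type u} [Monoid S]

/-- An `S`-act homomorphism (equivariant map). -/
def IsActHom (S : Type u) [Monoid S] {A B : Type u} [MulAction S A] [MulAction S B]
    (f : A → B) : Prop :=
  ∀ (s : S) (a : A), f (s • a) = s • f a

/-- A subact: a nonempty subset closed under the action. -/
def IsSubact (S : Type u) [Monoid S] {A : Type u} [MulAction S A] (B : Set A) : Prop :=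
  B.Nonempty ∧ ∀ (s : S), ∀ a ∈ B, s • a ∈ B

/-- A congruence on an `S`-act: an equivalence relation compatible with the action. -/
structure ActCong (S : Type u) [Monoid S] (A : Type u) [MulAction S A] where
  r : A → A → Prop
  iseqv : Equivalence r
  compat : ∀ (s : S) (a b : A), r a b → r (s • a) (s • b)

def ActCong.toSetoid {A : Type u} [MulAction S A] (χ : ActCong S A) : Setoid A :=
  ⟨χ.r, χ.iseqv⟩

instance actQuotSMul {A : Type u} [MulAction S A] (χ : ActCong S A) :
    SMul S (Quotient χ.toSetoid) :=
  ⟨fun s => Quotient.map (fun a => s • a) (fun a b h => χ.compat s a b h)⟩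

instance actQuotMulAction {A : Type u} [MulAction S A] (χ : ActCong S A) :
    MulAction S (Quotient χ.toSetoid) where
  one_smul := by
    intro x
    induction x using Quotient.inductionOn with
    | h a => exact congrArg (Quotient.mk χ.toSetoid) (one_smul S a)
  mul_smul := by
    intro s t x
    induction x using Quotient.inductionOn with
    | h a => exact congrArg (Quotient.mk χ.toSetoid) (mul_smul s t a)

/-- The Rees congruence determined by an action-closed subset `B`. -/
def reesCong {A : Type u} [MulAction S A] (B : Set A)
    (hB : ∀ (s : S), ∀ a ∈ B, s • a ∈ B) : ActCong S A where
  r a b := a = b ∨ (a ∈ B ∧ b ∈ B)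
  iseqv := by
    constructor
    · exact fun a => Or.inl rfl
    · rintro a b (rfl | ⟨h1, h2⟩)
      exacts [Or.inl rfl, Or.inr ⟨h2, h1⟩]
    · rintro a b c (rfl | ⟨h1, h2⟩) h
      · exact h
      · rcases h with rfl | ⟨h3, h4⟩
        exacts [Or.inr ⟨h1, h2⟩, Or.inr ⟨h1, h4⟩]
  compat := by
    rintro s a b (rfl | ⟨h1, h2⟩)
    exacts [Or.inl rfl, Or.inr ⟨hB s a h1, hB s b h2⟩]

/-- A Hoehnke radical on `S`-acts. -/
structure HoehnkeRadical (S : Type u) [Monoid S] : Type (u + 1) where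
  rad : ∀ (A : Type u) [MulAction S A], ActCong S A
  functorial : ∀ {A B : Type u} [MulAction S A] [MulAction S B] (f : A → B),
    IsActHom S f → ∀ a a' : A, (rad A).r a a' → (rad B).r (f a) (f a')
  radQuot : ∀ (A : Type u) [MulAction S A],
    ∀ x y : Quotient (rad A).toSetoid, (rad (Quotient (rad A).toSetoid)).r x y → x = y

/-- The closure `c^r_A(B)`: preimage of the `r(A/B)`-class of the collapsed point `B`. -/
def rClosure (r : HoehnkeRadical S) {A : Type u} [MulAction S A] (B : Set A)
    (hB : ∀ (s : S), ∀ a ∈ B, s • a ∈ B) : Set A :=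
  {a : A | ∃ b ∈ B, (r.rad (Quotient (reesCong B hB).toSetoid)).r
      (Quotient.mk (reesCong B hB).toSetoid a) (Quotient.mk (reesCong B hB).toSetoid b)}

/-- `B` is `r`-dense in `A`: the Rees quotient `A/B` is a radical act, `r(A/B) = ∇`. -/
def IsRDense (r : HoehnkeRadical S) {A : Type u} [MulAction S A] (B : Set A)
    (hB : ∀ (s : S), ∀ a ∈ B, s • a ∈ B) : Prop :=
  ∀ x y : Quotient (reesCong B hB).toSetoid, (r.rad (Quotient (reesCong B hB).toSetoid)).r x y

theorem image_closed {A C : Type u} [MulAction S A] [MulAction S C] {f : A → C}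
    (hf : IsActHom S f) {B : Set A} (hB : ∀ (s : S), ∀ a ∈ B, s • a ∈ B) :
    ∀ (s : S), ∀ c ∈ f '' B, s • c ∈ f '' B := by
  rintro s c ⟨a, ha, rfl⟩
  exact ⟨s • a, hB s a ha, hf s a⟩

theorem range_closed {A C : Type u} [MulAction S A] [MulAction S C] {f : A → C}
    (hf : IsActHom S f) :
    ∀ (s : S), ∀ c ∈ Set.range f, s • c ∈ Set.range f := by
  rintro s c ⟨a, rfl⟩
  exact ⟨s • a, hf s a⟩

theorem rClosure_closed (r : HoehnkeRadical S) {A : Type u} [MulAction S A]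
    (B : Set A) (hB : ∀ (s : S), ∀ a ∈ B, s • a ∈ B) :
    ∀ (s : S), ∀ a ∈ rClosure r B hB, s • a ∈ rClosure r B hB := by
  rintro s a ⟨b, hb, hab⟩
  exact ⟨s • b, hB s b hb, (r.rad _).compat s _ _ hab⟩

/-- The join of two congruences. -/
def congJoin {A : Type u} [MulAction S A] (τ₁ τ₂ : ActCong S A) : ActCong S A where
  r a b := ∀ θ : ActCong S A, (∀ x y, τ₁.r x y → θ.r x y) → (∀ x y, τ₂.r x y → θ.r x y) → θ.r a b
  iseqv := by
    constructor
    · exact fun a θ _ _ => θ.iseqv.refl a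
    · exact fun h θ h1 h2 => θ.iseqv.symm (h θ h1 h2)
    · exact fun h h' θ h1 h2 => θ.iseqv.trans (h θ h1 h2) (h' θ h1 h2)
  compat := fun s a b h θ h1 h2 => θ.compat s a b (h θ h1 h2)

/-- For `κ ≤ τ` the induced congruence `τ/κ` on the quotient `A/κ`. -/
def quotCong {A : Type u} [MulAction S A] (κ τ : ActCong S A)
    (h : ∀ a b, κ.r a b → τ.r a b) : ActCong S (Quotient κ.toSetoid) where
  r x y := ∃ a b : A, x = Quotient.mk κ.toSetoid a ∧ y = Quotient.mk κ.toSetoid b ∧ τ.r a b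
  iseqv := by
    constructor
    · intro x
      obtain ⟨a, rfl⟩ := Quotient.exists_rep x
      exact ⟨a, a, rfl, rfl, τ.iseqv.refl a⟩
    · rintro x y ⟨a, b, rfl, rfl, hab⟩
      exact ⟨b, a, rfl, rfl, τ.iseqv.symm hab⟩
    · rintro x y z ⟨a, b, rfl, hy, hab⟩ ⟨b', c, hy', rfl, hbc⟩
      refine ⟨a, c, rfl, rfl, τ.iseqv.trans hab (τ.iseqv.trans ?_ hbc)⟩
      exact h _ _ (Quotient.exact (hy.symm.trans hy'))
  compat := by
    rintro s x y ⟨a, b, rfl, rfl, hab⟩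
    exact ⟨s • a, s • b, rfl, rfl, τ.compat s a b hab⟩

/-- The smallest extension of an on-`B` congruence `χ` to the whole act. -/
def extCong {A : Type u} [MulAction S A] (χ : A → A → Prop)
    (hsymm : ∀ a b, χ a b → χ b a) (htrans : ∀ a b c, χ a b → χ b c → χ a c)
    (hcompat : ∀ (s : S) (a b : A), χ a b → χ (s • a) (s • b)) : ActCong S A where
  r a b := a = b ∨ χ a b
  iseqv := by
    constructor
    · exact fun a => Or.inl rfl
    · rintro a b (rfl | h)
      exacts [Or.inl rfl, Or.inr (hsymm _ _ h)]
    · rintro a b c (rfl | h) h'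
      · exact h'
      · rcases h' with rfl | h'
        exacts [Or.inr h, Or.inr (htrans _ _ _ h h')]
  compat := by
    rintro s a b (rfl | h)
    exacts [Or.inl rfl, Or.inr (hcompat s a b h)]

/-!
If `B ∩ X` had at most one point, the Rees projection `A → A/B` would be injective on `X`, so `X`
would reappear as a nontrivial subact of the radical act `A/B`. Pre-hereditarity makes this copy
radical, and the inverse of the projection maps it equivariantly back into the semisimple act `A`,
where the radical is trivial; hence `X` would have at most one point.
-/

def actImage {A C : Type u} [MulAction S A] [MulAction S C] {f : A → C} (hf : IsActHom S f)
    (X : Set A) (hX : ∀ (s : S), ∀ a ∈ X, s • a ∈ X) : SubMulAction S C :=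
  ⟨f '' X, fun {s c} hc => image_closed hf hX s c hc⟩

theorem exists_actHom_section {A C : Type u} [MulAction S A] [MulAction S C] {f : A → C}
    (hf : IsActHom S f) {X : Set A} (hX : ∀ (s : S), ∀ a ∈ X, s • a ∈ X) (hinj : Set.InjOn f X) :
    ∃ g : actImage hf X hX → A, IsActHom S g ∧ ∀ y, f (g y) = y := by
  choose g hgX hfg using fun y : actImage hf X hX => y.2
  refine ⟨g, fun s y => hinj (hgX (s • y)) (hX s _ (hgX y)) ?_, hfg⟩
  rw [hf, hfg, hfg]
  rfl

theorem reesCong_injOn {A : Type u} [MulAction S A] {B X : Set A}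
    (hB : ∀ (s : S), ∀ a ∈ B, s • a ∈ B) (hBX : (B ∩ X).Subsingleton) :
    Set.InjOn (Quotient.mk (reesCong B hB).toSetoid) X := fun _ hx _ hx' h =>
  (Quotient.exact h).elim id fun ⟨hxB, hx'B⟩ => hBX ⟨hxB, hx⟩ ⟨hx'B, hx'⟩

namespace HoehnkeRadical

variable (r : HoehnkeRadical S)

def IsRadical (A : Type u) [MulAction S A] : Prop :=
  ∀ x y : A, (r.rad A).r x y

def IsSemisimple (A : Type u) [MulAction S A] : Prop :=
  ∀ x y : A, (r.rad A).r x y → x = y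

def IsPreHereditary : Prop :=
  ∀ (A : Type u) [MulAction S A] (a₀ : A),
    Set.Nontrivial {x | (r.rad A).r x a₀} →
    (∀ (s : S), ∀ x ∈ {x | (r.rad A).r x a₀}, s • x ∈ {x | (r.rad A).r x a₀}) →
    ∀ Y : SubMulAction S A, (Y : Set A).Nonempty → (Y : Set A) ⊆ {x | (r.rad A).r x a₀} →
    ∀ y y' : ↥Y, (r.rad ↥Y).r y y'

variable {r}

/-- In a radical act the `r`-class of any point is the whole act. -/
theorem IsPreHereditary.isRadical_subMulAction (hpre : r.IsPreHereditary) {Q : Type u}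
    [MulAction S Q] (hQ : r.IsRadical Q) (Y : SubMulAction S Q) (hY : (Y : Set Q).Nontrivial) :
    r.IsRadical Y := by
  obtain ⟨y₀, hy₀⟩ := hY.nonempty
  have hclass : ∀ q : Q, q ∈ {x | (r.rad Q).r x y₀} := fun q => hQ q y₀
  exact hpre Q y₀ (hY.mono fun q _ => hclass q) (fun _ _ _ => hclass _) Y ⟨y₀, hy₀⟩
    (fun q _ => hclass q)

theorem IsSemisimple.eq_of_rad {A Y : Type u} [MulAction S A] [MulAction S Y]
    (hA : r.IsSemisimple A) {g : Y → A} (hg : IsActHom S g) {y y' : Y} (h : (r.rad Y).r y y') :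
    g y = g y' :=
  hA _ _ (r.functorial g hg y y' h)

theorem IsSemisimple.subsingleton_of_injOn {A C : Type u} [MulAction S A] [MulAction S C]
    (hA : r.IsSemisimple A) {f : A → C} (hf : IsActHom S f) {X : Set A}
    (hX : ∀ (s : S), ∀ a ∈ X, s • a ∈ X) (hinj : Set.InjOn f X)
    (hrad : r.IsRadical (actImage hf X hX)) : X.Subsingleton := by
  obtain ⟨g, hg, hfg⟩ := exists_actHom_section hf hX hinj
  intro x hx x' hx'
  apply hinj hx hx'
  simpa only [hfg] using
    congrArg f (hA.eq_of_rad hg (hrad ⟨f x, x, hx, rfl⟩ ⟨f x', x', hx', rfl⟩))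

end HoehnkeRadical

theorem rdense_is_intersection_large_of_preHereditary {S : Type u} [Monoid S]
    (r : HoehnkeRadical S)
    (hpre : ∀ (A : Type u) [MulAction S A] (a₀ : A),
      Set.Nontrivial {x | (r.rad A).r x a₀} →
      (∀ (s : S), ∀ x ∈ {x | (r.rad A).r x a₀}, s • x ∈ {x | (r.rad A).r x a₀}) →
      ∀ Y : SubMulAction S A, (Y : Set A).Nonempty → (Y : Set A) ⊆ {x | (r.rad A).r x a₀} →
      ∀ y y' : ↥Y, (r.rad ↥Y).r y y')
    {A : Type u} [MulAction S A] (hA : ∀ x y : A, (r.rad A).r x y → x = y)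
    (B : Set A) (hB : IsSubact S B) (hdense : IsRDense r B hB.2) :
    ∀ X : Set A, IsSubact S X → X.Nontrivial → (B ∩ X).Nontrivial := by
  intro X hX hXnt
  by_contra hBX
  rw [Set.not_nontrivial_iff] at hBX
  have hπ : IsActHom S (Quotient.mk (reesCong B hB.2).toSetoid) := fun _ _ => rfl
  have hinj := reesCong_injOn hB.2 hBX
  have hrad := HoehnkeRadical.IsPreHereditary.isRadical_subMulAction hpre hdense
    (actImage hπ X hX.2) (hinj.image_nontrivial_iff.mpr hXnt)
  exact hXnt.not_subsingleton
    (HoehnkeRadical.IsSemisimple.subsingleton_of_injOn hA hπ hX.2 hinj hrad)
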